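/- arXiv:1007.1077 — 6 statements merged into one kernel-verified Lean document; each statement's English description precedes it below -/
import Mathlib

section
/- Let F ⊣ U be an adjunction with U : 𝓒 → 𝓑, where 𝓒 has coequalizers and U is faithful. Then for every object C of 𝓒 and every parallel pair d₀, d₁ : B ⇉ U(C) in 𝓑 there is a morphism q : C → Q of 𝓒 with U(q) ∘ d₀ = U(q) ∘ d₁ which is universal for this property: for every morphism q′ : C → Q′ of 𝓒 with U(q′) ∘ d₀ = U(q′) ∘ d₁ there is a unique morphism h : Q → Q′ of 𝓒 such that U(h) ∘ U(q) = U(q′). -/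
open CategoryTheory CategoryTheory.Limits CategoryTheory.MonoidalCategory

universe w w' v u v₁ u₁ v₂ u₂ v₃ u₃ v₄ u₄

namespace Sur

variable {G : Type u} [Category.{v} G]

section Basic

variable {E : Type u₁} [Category.{v₁} E]

/-- A diagram whose composite with the arity functor is constant at `B`. -/
structure ArityConst (A : E ⥤ G) {J : Type w} [Category.{w'} J] (F : J ⥤ E) (B : G) : Prop where
  obj_eq : ∀ j, A.obj (F.obj j) = B
  map_eq : ∀ {j j'} (f : j ⟶ j'),
    A.map (F.map f) = eqToHom ((obj_eq j).trans (obj_eq j').symm)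

/-- A surcone on a diagram whose arity is constant at `B`: a cone together with an arity
morphism under which all legs lie. -/
structure Surcone (A : E ⥤ G) {J : Type w} [Category.{w'} J] (F : J ⥤ E) (B : G)
    (h : ∀ j, A.obj (F.obj j) = B) where
  pt : E
  leg : ∀ j, pt ⟶ F.obj j
  w : ∀ {j j'} (f : j ⟶ j'), leg j ≫ F.map f = leg j'
  arity : A.obj pt ⟶ B
  fac : ∀ j, A.map (leg j) ≫ eqToHom (h j) = arity

/-- A surcone is a surlimit if its apex is in the fiber over `B`, its arity is the identity,
and every surcone factors through it by a unique morphism. -/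
structure IsSurlimit (A : E ⥤ G) {J : Type w} [Category.{w'} J] {F : J ⥤ E} {B : G}
    {h : ∀ j, A.obj (F.obj j) = B} (c : Surcone A F B h) : Prop where
  pt_eq : A.obj c.pt = B
  arity_eq : c.arity = eqToHom pt_eq
  lift : ∀ c' : Surcone A F B h, ∃! f : c'.pt ⟶ c.pt,
    (∀ j, f ≫ c.leg j = c'.leg j) ∧ A.map f ≫ eqToHom pt_eq = c'.arity

/-- `(E, A)` has `J`-surlimits. -/
def HasSurlimitsOfShape (A : E ⥤ G) (J : Type w) [Category.{w'} J] : Prop :=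
  ∀ (F : J ⥤ E) (B : G) (hc : ArityConst A F B),
    ∃ c : Surcone A F B hc.obj_eq, IsSurlimit A c

/-- Dual notion : surcocone. -/
structure Surcocone (A : E ⥤ G) {J : Type w} [Category.{w'} J] (F : J ⥤ E) (B : G)
    (h : ∀ j, A.obj (F.obj j) = B) where
  pt : E
  leg : ∀ j, F.obj j ⟶ pt
  w : ∀ {j j'} (f : j ⟶ j'), F.map f ≫ leg j' = leg j
  arity : B ⟶ A.obj pt
  fac : ∀ j, eqToHom (h j).symm ≫ A.map (leg j) = arity

structure IsSurcolimit (A : E ⥤ G) {J : Type w} [Category.{w'} J] {F : J ⥤ E} {B : G}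
    {h : ∀ j, A.obj (F.obj j) = B} (c : Surcocone A F B h) : Prop where
  pt_eq : A.obj c.pt = B
  arity_eq : c.arity = eqToHom pt_eq.symm
  desc : ∀ c' : Surcocone A F B h, ∃! f : c.pt ⟶ c'.pt,
    (∀ j, c.leg j ≫ f = c'.leg j) ∧ eqToHom pt_eq.symm ≫ A.map f = c'.arity

def HasSurcolimitsOfShape (A : E ⥤ G) (J : Type w) [Category.{w'} J] : Prop :=
  ∀ (F : J ⥤ E) (B : G) (hc : ArityConst A F B),
    ∃ c : Surcocone A F B hc.obj_eq, IsSurcolimit A c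

/-- `(E, A)` has K-equalizers : every parallel pair with equal arity image has an equalizer
lying over an identity of the base. -/
def HasKEqualizers (A : E ⥤ G) : Prop :=
  ∀ ⦃a b : E⦄ (f g : a ⟶ b), A.map f = A.map g →
    ∃ (c : E) (e : c ⟶ a) (hc : A.obj c = A.obj a),
      A.map e = eqToHom hc ∧ e ≫ f = e ≫ g ∧
      ∀ ⦃d : E⦄ (k : d ⟶ a), k ≫ f = k ≫ g → ∃! l : d ⟶ c, l ≫ e = k

/-- `e` is a surcoequalizer of the pair `(f, g)`. -/
def IsSurcoequalizer (A : E ⥤ G) {a b c : E} (f g : a ⟶ b) (e : b ⟶ c) : Prop :=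
  ∃ h : A.obj b = A.obj c, A.map e = eqToHom h ∧ f ≫ e = g ≫ e ∧
    ∀ ⦃d : E⦄ (k : b ⟶ d), f ≫ k = g ≫ k → ∃! l : c ⟶ d, e ≫ l = k

/-- `(E, A)` has surcoequalizers of all parallel pairs lying in one fiber. -/
def HasSurcoequalizers (A : E ⥤ G) : Prop :=
  ∀ ⦃a b : E⦄ (f g : a ⟶ b) (hab : A.obj a = A.obj b),
    A.map f = eqToHom hab → A.map g = eqToHom hab →
    ∃ (c : E) (e : b ⟶ c), IsSurcoequalizer A f g e

/-- `(E, A)` has surequalizers of all parallel pairs lying in one fiber. -/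
def HasSurequalizers (A : E ⥤ G) : Prop :=
  ∀ ⦃a b : E⦄ (f g : a ⟶ b) (hab : A.obj a = A.obj b),
    A.map f = eqToHom hab → A.map g = eqToHom hab →
    ∃ (c : E) (e : c ⟶ a) (hc : A.obj c = A.obj a),
      A.map e = eqToHom hc ∧ e ≫ f = e ≫ g ∧
      ∀ ⦃d : E⦄ (k : d ⟶ a), k ≫ f = k ≫ g → ∃! l : d ⟶ c, l ≫ e = k

/-- A split surfork : a split fork lying entirely in one fiber. -/
def IsSplitSurfork (A : E ⥤ G) {a b c : E} (f g : a ⟶ b) (h : b ⟶ c) : Prop :=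
  (∃ hab : A.obj a = A.obj b, A.map f = eqToHom hab ∧ A.map g = eqToHom hab) ∧
  (∃ hbc : A.obj b = A.obj c, A.map h = eqToHom hbc) ∧
  f ≫ h = g ≫ h ∧
  ∃ (s : c ⟶ b) (t : b ⟶ a),
    (∃ hcb : A.obj c = A.obj b, A.map s = eqToHom hcb) ∧
    (∃ hba : A.obj b = A.obj a, A.map t = eqToHom hba) ∧
    s ≫ h = 𝟙 c ∧ t ≫ f = 𝟙 b ∧ t ≫ g = h ≫ s

/-- A surinitial object in the fiber over `Gobj`. -/
def Surinitial (A : E ⥤ G) (Gobj : G) (x : E) : Prop :=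
  ∃ hx : A.obj x = Gobj, ∀ (d : E) (h : Gobj ⟶ A.obj d),
    ∃! f : x ⟶ d, A.map f = eqToHom hx ≫ h

/-- A surmonad : a monad whose underlying functor, unit and multiplication lie over
identities of the base. -/
structure IsSurmonad (A : E ⥤ G) (T : Monad E) : Prop where
  sur : T.toFunctor ⋙ A = A
  unit_arity : ∀ X : E, A.map (T.η.app X) = eqToHom (Functor.congr_obj sur X).symm
  mul_arity : ∀ X : E, A.map (T.μ.app X) = eqToHom (Functor.congr_obj sur (T.obj X))

end Basic

section Two

variable {E : Type u₁} [Category.{v₁} E] {E' : Type u₂} [Category.{v₂} E']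

/-- An absolute surcoequalizer : a surcoequalizer preserved by every surfunctor. -/
def IsAbsoluteSurcoequalizer.{ua, va, ug, vg, ue, ve} {Gb : Type ug} [Category.{vg} Gb]
    {Eb : Type ue} [Category.{ve} Eb] (A : Eb ⥤ Gb) {a b c : Eb}
    (f g : a ⟶ b) (e : b ⟶ c) : Prop :=
  IsSurcoequalizer A f g e ∧
  ∀ (D : Type ua) [Category.{va} D] (A' : D ⥤ Gb) (Fc : Eb ⥤ D),
    Fc ⋙ A' = A → IsSurcoequalizer A' (Fc.map f) (Fc.map g) (Fc.map e)

/-- The image of a surcone under a surfunctor. -/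
def Surcone.map {A : E ⥤ G} {A' : E' ⥤ G} (Fc : E ⥤ E') (hsur : Fc ⋙ A' = A)
    {J : Type w} [Category.{w'} J] {D : J ⥤ E} {B : G} {h : ∀ j, A.obj (D.obj j) = B}
    (c : Surcone A D B h) :
    Surcone A' (D ⋙ Fc) B (fun j => (Functor.congr_obj hsur (D.obj j)).trans (h j)) where
  pt := Fc.obj c.pt
  leg j := Fc.map (c.leg j)
  w {j j'} f := by
    dsimp only [Functor.comp_map]
    rw [← Fc.map_comp, c.w f]
  arity := eqToHom (Functor.congr_obj hsur c.pt) ≫ c.arity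
  fac j := by
    have h1 := Functor.congr_hom hsur (c.leg j)
    dsimp only [Functor.comp_map] at h1
    rw [h1, Category.assoc, Category.assoc, eqToHom_trans, c.fac j]

/-- The image of a surcocone under a surfunctor. -/
def Surcocone.map {A : E ⥤ G} {A' : E' ⥤ G} (Fc : E ⥤ E') (hsur : Fc ⋙ A' = A)
    {J : Type w} [Category.{w'} J] {D : J ⥤ E} {B : G} {h : ∀ j, A.obj (D.obj j) = B}
    (c : Surcocone A D B h) :
    Surcocone A' (D ⋙ Fc) B (fun j => (Functor.congr_obj hsur (D.obj j)).trans (h j)) where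
  pt := Fc.obj c.pt
  leg j := Fc.map (c.leg j)
  w {j j'} f := by
    dsimp only [Functor.comp_map]
    rw [← Fc.map_comp, c.w f]
  arity := c.arity ≫ eqToHom (Functor.congr_obj hsur c.pt).symm
  fac j := by
    have h1 := Functor.congr_hom hsur (c.leg j)
    dsimp only [Functor.comp_map] at h1
    rw [h1, eqToHom_trans_assoc, ← Category.assoc, c.fac j]

/-- A surfunctor preserves `J`-surlimits. -/
def PreservesSurlimitsOfShape {A : E ⥤ G} {A' : E' ⥤ G} (Fc : E ⥤ E') (hsur : Fc ⋙ A' = A)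
    (J : Type w) [Category.{w'} J] : Prop :=
  ∀ (D : J ⥤ E) (B : G) (hc : ArityConst A D B) (c : Surcone A D B hc.obj_eq),
    IsSurlimit A c → IsSurlimit A' (c.map Fc hsur)

/-- A surfunctor preserves `J`-surcolimits. -/
def PreservesSurcolimitsOfShape {A : E ⥤ G} {A' : E' ⥤ G} (Fc : E ⥤ E') (hsur : Fc ⋙ A' = A)
    (J : Type w) [Category.{w'} J] : Prop :=
  ∀ (D : J ⥤ E) (B : G) (hc : ArityConst A D B) (c : Surcocone A D B hc.obj_eq),
    IsSurcolimit A c → IsSurcolimit A' (c.map Fc hsur)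

/-- A surfunctor preserves K-equalizers. -/
def PreservesKEqualizers {A : E ⥤ G} {A' : E' ⥤ G} (Fc : E ⥤ E')
    (_hsur : Fc ⋙ A' = A) : Prop :=
  ∀ ⦃a b c : E⦄ (f g : a ⟶ b) (e : c ⟶ a) (hc : A.obj c = A.obj a),
    A.map f = A.map g → A.map e = eqToHom hc → e ≫ f = e ≫ g →
    (∀ ⦃d : E⦄ (k : d ⟶ a), k ≫ f = k ≫ g → ∃! l : d ⟶ c, l ≫ e = k) →
    (Fc.map e ≫ Fc.map f = Fc.map e ≫ Fc.map g ∧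
     ∀ ⦃d : E'⦄ (k : d ⟶ Fc.obj a), k ≫ Fc.map f = k ≫ Fc.map g →
       ∃! l : d ⟶ Fc.obj c, l ≫ Fc.map e = k)

/-- A suradjunction : an adjunction between surfunctors whose unit and counit lie over
identities of the base. -/
structure IsSuradjunction (A' : E' ⥤ G) (A : E ⥤ G) (Fl : E' ⥤ E) (Fr : E ⥤ E')
    (adj : Fl ⊣ Fr) : Prop where
  left_sur : Fl ⋙ A = A'
  right_sur : Fr ⋙ A' = A
  unit_arity : ∀ X : E', A'.map (adj.unit.app X) =
    eqToHom (((Functor.congr_obj right_sur (Fl.obj X)).trans (Functor.congr_obj left_sur X)).symm)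
  counit_arity : ∀ Y : E, A.map (adj.counit.app Y) =
    eqToHom ((Functor.congr_obj left_sur (Fr.obj Y)).trans (Functor.congr_obj right_sur Y))

/-- `U` creates surcoequalizers of the parallel pair `(f, g)`. -/
def CreatesSurcoequalizersOf (A : E ⥤ G) (A' : E' ⥤ G) (U : E ⥤ E')
    {a b : E} (f g : a ⟶ b) : Prop :=
  ∀ (c : E') (e : U.obj b ⟶ c), IsSurcoequalizer A' (U.map f) (U.map g) e →
    ∃ (z : E) (q : b ⟶ z) (hz : U.obj z = c),
      U.map q = e ≫ eqToHom hz.symm ∧ IsSurcoequalizer A f g q ∧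
      ∀ (z' : E) (q' : b ⟶ z') (hz' : U.obj z' = c),
        U.map q' = e ≫ eqToHom hz'.symm →
        ∃ hzz : z = z', q' = q ≫ eqToHom hzz

/-- The solution set condition for an object `B` relative to a surfunctor `Fc`. -/
def SolutionSet (A' : E' ⥤ G) (Fc : E ⥤ E') (B : E') : Prop :=
  ∃ (I : Type w) (obj : I → E) (bi : ∀ i, B ⟶ Fc.obj (obj i))
    (hι : ∀ i, A'.obj B = A'.obj (Fc.obj (obj i))),
    (∀ i, A'.map (bi i) = eqToHom (hι i)) ∧
    ∀ (a : E) (b : B ⟶ Fc.obj a), ∃ (i : I) (x : obj i ⟶ a), bi i ≫ Fc.map x = b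

/-- A fusionnable suradjunction (condition on the right adjoint surfunctor `U`). -/
def Fusionnable {Ac : E ⥤ G} {Ab : E' ⥤ G} (U : E ⥤ E') (hU : U ⋙ Ab = Ac) : Prop :=
  HasSurcoequalizers Ac ∧ HasSurcolimitsOfShape Ac ℕ ∧ HasSurcolimitsOfShape Ab ℕ ∧
  U.Faithful ∧ PreservesSurcolimitsOfShape U hU ℕ

/-- A `κ`-filtered category : every diagram of size `< κ` admits a cocone. -/
def IsCardinalFilteredCat (J : Type w) [Category.{w} J] (κ : Cardinal.{w}) : Prop :=
  ∀ (K : Type w) [SmallCategory K], Cardinal.mk K < κ →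
    Cardinal.mk ((k : K) × (k' : K) × (k ⟶ k')) < κ →
    ∀ D : K ⥤ J, ∃ (j : J) (cc : ∀ k, D.obj k ⟶ j),
      ∀ {k k'} (f : k ⟶ k'), D.map f ≫ cc k' = cc k

end Two

section Pullback

variable {E : Type u₁} [Category.{v₁} E] {E' : Type u₂} [Category.{v₂} E']
  {Bc : Type u₃} [Category.{v₃} Bc]

/-- The strict pullback of two functors `U : E ⥤ Bc` and `V : E' ⥤ Bc`. -/
structure CatPullback (U : E ⥤ Bc) (V : E' ⥤ Bc) where
  left : E
  right : E'
  eq : U.obj left = V.obj right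

@[ext]
structure CatPullbackHom (U : E ⥤ Bc) (V : E' ⥤ Bc) (X Y : CatPullback U V) where
  left : X.left ⟶ Y.left
  right : X.right ⟶ Y.right
  w : U.map left = eqToHom X.eq ≫ V.map right ≫ eqToHom Y.eq.symm

instance (U : E ⥤ Bc) (V : E' ⥤ Bc) : Category (CatPullback U V) where
  Hom X Y := CatPullbackHom U V X Y
  id X := ⟨𝟙 _, 𝟙 _, by simp⟩
  comp f g := ⟨f.left ≫ g.left, f.right ≫ g.right, by simp [f.w, g.w]⟩
  id_comp f := by apply CatPullbackHom.ext <;> simp [CategoryStruct.comp, CategoryStruct.id]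
  comp_id f := by apply CatPullbackHom.ext <;> simp [CategoryStruct.comp, CategoryStruct.id]
  assoc f g h := by apply CatPullbackHom.ext <;> simp [CategoryStruct.comp]

/-- The canonical functor from the strict pullback of `U` and `V` to their common codomain. -/
def Ofun (U : E ⥤ Bc) (V : E' ⥤ Bc) : CatPullback U V ⥤ Bc where
  obj X := U.obj X.left
  map f := U.map f.left
  map_id X := by
    show U.map (𝟙 X.left) = _
    simp
  map_comp f g := by
    show U.map (_ ≫ _) = _
    simp

/-- The arity functor on the comma category `B ↓ Fc` of a surfunctor `Fc`. -/
def commaArity {A : E ⥤ G} {A' : E' ⥤ G} (Fc : E ⥤ E') (hsur : Fc ⋙ A' = A) (B : E') :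
    StructuredArrow B Fc ⥤ Under (A'.obj B) where
  obj p := Under.mk (A'.map p.hom ≫ eqToHom (Functor.congr_obj hsur p.right))
  map {p q} f := Under.homMk (A.map f.right) (by
    have hw : p.hom ≫ Fc.map f.right = q.hom := StructuredArrow.w f
    have h1 := Functor.congr_hom hsur f.right
    dsimp only [Functor.comp_map] at h1
    dsimp [Under.mk]
    have h2 : eqToHom (Functor.congr_obj hsur p.right) ≫ A.map f.right
        = A'.map (Fc.map f.right) ≫ eqToHom (Functor.congr_obj hsur q.right) := by
      rw [h1]; simp
    rw [Category.assoc, h2, ← Category.assoc, ← A'.map_comp, hw])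

end Pullback

/-- Universal coequalizing morphism under a faithful right adjoint (Lemma 4). -/
theorem coequalize_under_faithful_right_adjoint
    {B : Type u₁} [Category.{v₁} B] {C : Type u₂} [Category.{v₂} C]
    (U : C ⥤ B) (F : B ⥤ C) (adj : F ⊣ U) [U.Faithful] [HasCoequalizers C]
    (Cobj : C) (Bobj : B) (d₀ d₁ : Bobj ⟶ U.obj Cobj) :
    ∃ (Q : C) (q : Cobj ⟶ Q),
      d₀ ≫ U.map q = d₁ ≫ U.map q ∧
      ∀ (Q' : C) (q' : Cobj ⟶ Q'), d₀ ≫ U.map q' = d₁ ≫ U.map q' →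
        ∃! h : Q ⟶ Q', U.map q ≫ U.map h = U.map q' := by
  set e₀ : F.obj Bobj ⟶ Cobj := (adj.homEquiv _ _).symm d₀ with he₀
  set e₁ : F.obj Bobj ⟶ Cobj := (adj.homEquiv _ _).symm d₁ with he₁
  refine ⟨coequalizer e₀ e₁, coequalizer.π e₀ e₁, ?_, ?_⟩
  · have := coequalizer.condition e₀ e₁
    have h := congrArg (adj.homEquiv _ _) this
    rwa [adj.homEquiv_naturality_right, adj.homEquiv_naturality_right,
      Equiv.apply_symm_apply, Equiv.apply_symm_apply] at h
  · intro Q' q' hq'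
    have hcoeq : e₀ ≫ q' = e₁ ≫ q' := by
      rw [he₀, he₁, ← adj.homEquiv_naturality_right_symm,
        ← adj.homEquiv_naturality_right_symm, hq']
    refine ⟨coequalizer.desc q' hcoeq, by simp [← U.map_comp], ?_⟩
    intro h hh
    apply coequalizer.hom_ext
    apply U.map_injective
    rw [U.map_comp, hh, coequalizer.π_desc]

end Sur
end

section
/- Let U : (𝓒, A) → (𝓑, A′) be the right adjoint surfunctor of a suradjunction over 𝔾, such that 𝓒 has surcoequalizers and U is faithful. Then for every object C of 𝓒 and every parallel pair d₀, d₁ : B ⇉ U(C) lying in one fiber 𝓑_G of 𝓑, there is a morphism q : C → Q in the fiber 𝓒_G with U(q) ∘ d₀ = U(q) ∘ d₁ which is universal for this property: for every morphism q′ : C → Q′ of 𝓒 with U(q′) ∘ d₀ = U(q′) ∘ d₁ there is a unique morphism h : Q → Q′ of 𝓒 such that U(h) ∘ U(q) = U(q′). -/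
open CategoryTheory CategoryTheory.Limits CategoryTheory.MonoidalCategory

universe w w' v u v₁ u₁ v₂ u₂ v₃ u₃ v₄ u₄

namespace Sur

variable {G : Type u} [Category.{v} G]

/-- Universal coequalizing morphism under a faithful right adjoint surfunctor (Lemma 5). -/
theorem surcoequalize_under_faithful_right_suradjoint
    {G : Type u} [Category.{v} G]
    {Bc : Type u₁} [Category.{v₁} Bc] {Cc : Type u₂} [Category.{v₂} Cc]
    (A' : Bc ⥤ G) (Ac : Cc ⥤ G) (U : Cc ⥤ Bc) (M : Bc ⥤ Cc)
    (adj : M ⊣ U) (hadj : IsSuradjunction A' Ac M U adj)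
    (hcoeq : HasSurcoequalizers Ac) (hf : U.Faithful)
    (Cobj : Cc) (Bobj : Bc) (d₀ d₁ : Bobj ⟶ U.obj Cobj)
    (hfib : A'.obj Bobj = A'.obj (U.obj Cobj))
    (h₀ : A'.map d₀ = eqToHom hfib) (h₁ : A'.map d₁ = eqToHom hfib) :
    ∃ (Q : Cc) (q : Cobj ⟶ Q) (hQ : Ac.obj Cobj = Ac.obj Q),
      Ac.map q = eqToHom hQ ∧
      d₀ ≫ U.map q = d₁ ≫ U.map q ∧
      ∀ (Q' : Cc) (q' : Cobj ⟶ Q'), d₀ ≫ U.map q' = d₁ ≫ U.map q' →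
        ∃! h : Q ⟶ Q', U.map q ≫ U.map h = U.map q' := by
  set f₀ : M.obj Bobj ⟶ Cobj := (adj.homEquiv Bobj Cobj).symm d₀ with hf₀
  set f₁ : M.obj Bobj ⟶ Cobj := (adj.homEquiv Bobj Cobj).symm d₁ with hf₁
  have hab : Ac.obj (M.obj Bobj) = Ac.obj Cobj :=
    (Functor.congr_obj hadj.left_sur Bobj).trans
      (hfib.trans (Functor.congr_obj hadj.right_sur Cobj))
  have harM : ∀ (d : Bobj ⟶ U.obj Cobj), A'.map d = eqToHom hfib →
      Ac.map ((adj.homEquiv Bobj Cobj).symm d) = eqToHom hab := by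
    intro d hd
    have hc := Functor.congr_hom hadj.left_sur d
    dsimp only [Functor.comp_map] at hc
    rw [Adjunction.homEquiv_counit, Functor.map_comp, hadj.counit_arity, hc, hd]
    simp
  obtain ⟨Q, q, hQ', hq', hcomm, huniv⟩ := hcoeq f₀ f₁ hab (harM d₀ h₀) (harM d₁ h₁)
  refine ⟨Q, q, hQ', hq', ?_, ?_⟩
  · have e₀ : d₀ ≫ U.map q = (adj.homEquiv Bobj Q) (f₀ ≫ q) := by
      rw [Adjunction.homEquiv_naturality_right]
      simp [hf₀]
    have e₁ : d₁ ≫ U.map q = (adj.homEquiv Bobj Q) (f₁ ≫ q) := by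
      rw [Adjunction.homEquiv_naturality_right]
      simp [hf₁]
    rw [e₀, e₁, hcomm]
  · intro Q' q' hq'eq
    have hfq : f₀ ≫ q' = f₁ ≫ q' := by
      rw [hf₀, hf₁, ← Adjunction.homEquiv_naturality_right_symm,
        ← Adjunction.homEquiv_naturality_right_symm, hq'eq]
    obtain ⟨h, hh, hhuniq⟩ := huniv q' hfq
    refine ⟨h, ?_, ?_⟩
    · show U.map q ≫ U.map h = U.map q'
      rw [← Functor.map_comp, hh]
    · intro h' hh'
      apply hhuniq
      apply hf.map_injective
      rw [Functor.map_comp, hh']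

end Sur
end

section
/- Let F ⊣ G with G : (𝓐, A) → (𝓧, A′) and F′ ⊣ G′ with G′ : (𝓐′, A″) → (𝓧, A′) be two suradjunctions over 𝔾 having the same surmonad T on (𝓧, A′). If G creates surcoequalizers of every parallel pair in 𝓐 whose G-image extends to a split surfork, then there is a unique surfunctor M : (𝓐′, A″) → (𝓐, A) such that M ∘ F′ = F and G ∘ M = G′. -/
open CategoryTheory CategoryTheory.Limits CategoryTheory.MonoidalCategory

universe w w' v u v₁ u₁ v₂ u₂ v₃ u₃ v₄ u₄

namespace Sur

variable {G : Type u} [Category.{v} G]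

section Lemma2

theorem monad_eq_eta {C : Type u₁} [Category.{v₁} C] {T T' : Monad C} (h : T = T') (x : C) :
    T.η.app x = T'.η.app x ≫ eqToHom (show T'.obj x = T.obj x by rw [h]) := by
  subst h; simp

theorem monad_eq_mu {C : Type u₁} [Category.{v₁} C] {T T' : Monad C} (h : T = T') (x : C) :
    T.μ.app x = eqToHom (show T.obj (T.obj x) = T'.obj (T'.obj x) by rw [h]) ≫
      T'.μ.app x ≫ eqToHom (show T'.obj x = T.obj x by rw [h]) := by
  subst h; simp

theorem IsSplitSurfork.isSurcoequalizer {E : Type u₁} [Category.{v₁} E] {A : E ⥤ G}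
    {a b c : E} {f g : a ⟶ b} {h : b ⟶ c} (H : IsSplitSurfork A f g h) :
    IsSurcoequalizer A f g h := by
  obtain ⟨⟨hab, hf, hg⟩, ⟨hbc, hh⟩, hfg, s, t, _, _, hsh, htf, htg⟩ := H
  refine ⟨hbc, hh, hfg, fun d k hk => ⟨s ≫ k, ?_, fun l hl => ?_⟩⟩
  · show h ≫ s ≫ k = k
    have h1 : h ≫ s ≫ k = (t ≫ g) ≫ k := by rw [htg]; simp
    rw [h1, Category.assoc, ← hk, ← Category.assoc, htf, Category.id_comp]
  · show l = s ≫ k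
    rw [← hl, ← Category.assoc, hsh, Category.id_comp]

/-- Bundle of the data of two suradjunctions with the same surmonad. -/
structure Setup (G : Type u) [Category.{v} G] (X : Type u₁) [Category.{v₁} X]
    (Ac : Type u₂) [Category.{v₂} Ac] (Ac' : Type u₃) [Category.{v₃} Ac'] where
  A' : X ⥤ G
  A : Ac ⥤ G
  A₂ : Ac' ⥤ G
  Fl : X ⥤ Ac
  Gr : Ac ⥤ X
  adj : Fl ⊣ Gr
  h1 : IsSuradjunction A' A Fl Gr adj
  Fl' : X ⥤ Ac'
  Gr' : Ac' ⥤ X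
  adj' : Fl' ⊣ Gr'
  h2 : IsSuradjunction A' A₂ Fl' Gr' adj'
  hsame : adj.toMonad = adj'.toMonad
  hcreate : ∀ ⦃a b : Ac⦄ (f g : a ⟶ b),
    (∃ (c : X) (h : Gr.obj b ⟶ c), IsSplitSurfork A' (Gr.map f) (Gr.map g) h) →
    CreatesSurcoequalizersOf A A' Gr f g

namespace Setup

variable {X : Type u₁} [Category.{v₁} X] {Ac : Type u₂} [Category.{v₂} Ac]
  {Ac' : Type u₃} [Category.{v₃} Ac'] (S : Setup G X Ac Ac')

theorem hGF : S.Fl ⋙ S.Gr = S.Fl' ⋙ S.Gr' := congrArg Monad.toFunctor S.hsame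

theorem hT (x : X) : S.Gr.obj (S.Fl.obj x) = S.Gr'.obj (S.Fl'.obj x) :=
  Functor.congr_obj S.hGF x

theorem hEta (x : X) : S.adj.unit.app x = S.adj'.unit.app x ≫ eqToHom (S.hT x).symm :=
  monad_eq_eta S.hsame x

theorem hTT (x : X) : S.Gr.obj (S.Fl.obj (S.Gr.obj (S.Fl.obj x))) =
    S.Gr'.obj (S.Fl'.obj (S.Gr'.obj (S.Fl'.obj x))) := by rw [S.hT x, S.hT]

theorem hMu (x : X) : S.Gr.map (S.adj.counit.app (S.Fl.obj x)) =
    eqToHom (S.hTT x) ≫ S.Gr'.map (S.adj'.counit.app (S.Fl'.obj x)) ≫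
      eqToHom (S.hT x).symm :=
  monad_eq_mu S.hsame x

theorem hTmap {x y : X} (u : x ⟶ y) : S.Gr.map (S.Fl.map u) =
    eqToHom (S.hT x) ≫ S.Gr'.map (S.Fl'.map u) ≫ eqToHom (S.hT y).symm :=
  Functor.congr_hom S.hGF u

theorem oA'Gr (z : Ac) : S.A'.obj (S.Gr.obj z) = S.A.obj z := Functor.congr_obj S.h1.right_sur z
theorem oAFl (x : X) : S.A.obj (S.Fl.obj x) = S.A'.obj x := Functor.congr_obj S.h1.left_sur x
theorem oA'Gr' (a : Ac') : S.A'.obj (S.Gr'.obj a) = S.A₂.obj a :=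
  Functor.congr_obj S.h2.right_sur a
theorem oA₂Fl' (x : X) : S.A₂.obj (S.Fl'.obj x) = S.A'.obj x :=
  Functor.congr_obj S.h2.left_sur x

theorem oT (x : X) : S.A'.obj (S.Gr.obj (S.Fl.obj x)) = S.A'.obj x :=
  (S.oA'Gr _).trans (S.oAFl x)
theorem oT' (x : X) : S.A'.obj (S.Gr'.obj (S.Fl'.obj x)) = S.A'.obj x :=
  (S.oA'Gr' _).trans (S.oA₂Fl' x)

theorem oTT' (x : X) : S.A'.obj (S.Gr.obj (S.Fl.obj (S.Gr'.obj (S.Fl'.obj x)))) =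
    S.A'.obj (S.Gr.obj (S.Fl.obj x)) := by rw [S.oT, S.oT, S.oT']

theorem mA'Gr {z w : Ac} (u : z ⟶ w) : S.A'.map (S.Gr.map u) =
    eqToHom (S.oA'Gr z) ≫ S.A.map u ≫ eqToHom (S.oA'Gr w).symm :=
  Functor.congr_hom S.h1.right_sur u
theorem mAFl {x y : X} (u : x ⟶ y) : S.A.map (S.Fl.map u) =
    eqToHom (S.oAFl x) ≫ S.A'.map u ≫ eqToHom (S.oAFl y).symm :=
  Functor.congr_hom S.h1.left_sur u
theorem mA'Gr' {a b : Ac'} (u : a ⟶ b) : S.A'.map (S.Gr'.map u) =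
    eqToHom (S.oA'Gr' a) ≫ S.A₂.map u ≫ eqToHom (S.oA'Gr' b).symm :=
  Functor.congr_hom S.h2.right_sur u

/-- First leg of the canonical presentation pair. -/
def pf (a : Ac') : S.Fl.obj (S.Gr'.obj (S.Fl'.obj (S.Gr'.obj a))) ⟶ S.Fl.obj (S.Gr'.obj a) :=
  S.Fl.map (eqToHom (S.hT (S.Gr'.obj a)).symm) ≫ S.adj.counit.app (S.Fl.obj (S.Gr'.obj a))

/-- Second leg of the canonical presentation pair. -/
def pg (a : Ac') : S.Fl.obj (S.Gr'.obj (S.Fl'.obj (S.Gr'.obj a))) ⟶ S.Fl.obj (S.Gr'.obj a) :=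
  S.Fl.map (S.Gr'.map (S.adj'.counit.app a))

/-- The split surcoequalizer of the image pair. -/
def ee (a : Ac') : S.Gr.obj (S.Fl.obj (S.Gr'.obj a)) ⟶ S.Gr'.obj a :=
  eqToHom (S.hT (S.Gr'.obj a)) ≫ S.Gr'.map (S.adj'.counit.app a)

theorem splitfork (a : Ac') :
    IsSplitSurfork S.A' (S.Gr.map (S.pf a)) (S.Gr.map (S.pg a)) (S.ee a) := by
  refine ⟨⟨S.oTT' (S.Gr'.obj a), ?_, ?_⟩,
    ⟨S.oT (S.Gr'.obj a), ?_⟩, ?_, S.adj.unit.app (S.Gr'.obj a),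
    S.adj.unit.app (S.Gr.obj (S.Fl.obj (S.Gr'.obj a))) ≫
      S.Gr.map (S.Fl.map (eqToHom (S.hT (S.Gr'.obj a)))),
    ⟨(S.oT _).symm, ?_⟩, ⟨(S.oTT' (S.Gr'.obj a)).symm, ?_⟩,
    ?_, ?_, ?_⟩
  · -- arity of Gr.map (pf a)
    simp [pf, S.mA'Gr, S.mAFl, S.h1.counit_arity, eqToHom_map]
  · -- arity of Gr.map (pg a)
    simp [pg, S.mA'Gr, S.mAFl, S.mA'Gr', S.h2.counit_arity, eqToHom_map]
  · -- arity of ee a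
    simp [ee, S.mA'Gr', S.h2.counit_arity, eqToHom_map]
  · -- fork equation
    simp only [pf, pg, ee, Functor.map_comp, Category.assoc, S.hMu, S.hTmap, eqToHom_map,
      eqToHom_trans_assoc, eqToHom_trans, eqToHom_refl, Category.id_comp, Category.comp_id]
    rw [← S.Gr'.map_comp, ← S.Gr'.map_comp, S.adj'.counit_naturality]
  · -- arity of s
    simp [S.h1.unit_arity]
  · -- arity of t
    simp [S.h1.unit_arity, S.mA'Gr, S.mAFl, eqToHom_map]
  · -- s ≫ ee = 𝟙
    rw [S.hEta]
    simp [ee]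
  · -- t ≫ Gr.map (pf a) = 𝟙
    simp [pf, eqToHom_map]
  · -- t ≫ Gr.map (pg a) = ee ≫ s
    simp [pg, ee]

theorem exists_create (a : Ac') :
    ∃ (z : Ac) (q : S.Fl.obj (S.Gr'.obj a) ⟶ z) (hz : S.Gr.obj z = S.Gr'.obj a),
      S.Gr.map q = S.ee a ≫ eqToHom hz.symm ∧ IsSurcoequalizer S.A (S.pf a) (S.pg a) q ∧
      ∀ (z' : Ac) (q' : S.Fl.obj (S.Gr'.obj a) ⟶ z') (hz' : S.Gr.obj z' = S.Gr'.obj a),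
        S.Gr.map q' = S.ee a ≫ eqToHom hz'.symm → ∃ hzz : z = z', q' = q ≫ eqToHom hzz :=
  S.hcreate (S.pf a) (S.pg a) ⟨_, _, S.splitfork a⟩ (S.Gr'.obj a) (S.ee a)
    (S.splitfork a).isSurcoequalizer

noncomputable def Mz (a : Ac') : Ac := (S.exists_create a).choose

noncomputable def Mq (a : Ac') : S.Fl.obj (S.Gr'.obj a) ⟶ S.Mz a :=
  (S.exists_create a).choose_spec.choose

theorem Mhz (a : Ac') : S.Gr.obj (S.Mz a) = S.Gr'.obj a :=
  (S.exists_create a).choose_spec.choose_spec.choose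

theorem Mq_Gr (a : Ac') : S.Gr.map (S.Mq a) = S.ee a ≫ eqToHom (S.Mhz a).symm :=
  (S.exists_create a).choose_spec.choose_spec.choose_spec.1

theorem Mq_coeq (a : Ac') : IsSurcoequalizer S.A (S.pf a) (S.pg a) (S.Mq a) :=
  (S.exists_create a).choose_spec.choose_spec.choose_spec.2.1

theorem Muniq (a : Ac') (z' : Ac) (q' : S.Fl.obj (S.Gr'.obj a) ⟶ z')
    (hz' : S.Gr.obj z' = S.Gr'.obj a) (h : S.Gr.map q' = S.ee a ≫ eqToHom hz'.symm) :
    ∃ hzz : S.Mz a = z', q' = S.Mq a ≫ eqToHom hzz :=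
  (S.exists_create a).choose_spec.choose_spec.choose_spec.2.2 z' q' hz' h

theorem Mq_arity_obj (a : Ac') : S.A.obj (S.Fl.obj (S.Gr'.obj a)) = S.A.obj (S.Mz a) :=
  (S.Mq_coeq a).choose

theorem Mq_arity (a : Ac') : S.A.map (S.Mq a) = eqToHom (S.Mq_arity_obj a) :=
  (S.Mq_coeq a).choose_spec.1

theorem Mq_w (a : Ac') : S.pf a ≫ S.Mq a = S.pg a ≫ S.Mq a :=
  (S.Mq_coeq a).choose_spec.2.1

theorem Mq_desc (a : Ac') {d : Ac} (k : S.Fl.obj (S.Gr'.obj a) ⟶ d)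
    (hk : S.pf a ≫ k = S.pg a ≫ k) : ∃! l : S.Mz a ⟶ d, S.Mq a ≫ l = k :=
  (S.Mq_coeq a).choose_spec.2.2 k hk

theorem Mq_epi (a : Ac') {d : Ac} {u v : S.Mz a ⟶ d} (h : S.Mq a ≫ u = S.Mq a ≫ v) :
    u = v := by
  obtain ⟨l, -, hu⟩ := S.Mq_desc a (S.Mq a ≫ v)
    (by rw [← Category.assoc, ← Category.assoc, S.Mq_w])
  exact (hu u h).trans (hu v rfl).symm

theorem sq {a b : Ac'} (u : a ⟶ b) :
    S.pf a ≫ S.Fl.map (S.Gr'.map u) ≫ S.Mq b = S.pg a ≫ S.Fl.map (S.Gr'.map u) ≫ S.Mq b := by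
  have e1 : S.pg a ≫ S.Fl.map (S.Gr'.map u)
      = S.Fl.map (S.Gr'.map (S.Fl'.map (S.Gr'.map u))) ≫ S.pg b := by
    simp only [pg, ← Functor.map_comp]
    rw [S.adj'.counit_naturality]
  have e2 : S.pf a ≫ S.Fl.map (S.Gr'.map u)
      = S.Fl.map (S.Gr'.map (S.Fl'.map (S.Gr'.map u))) ≫ S.pf b := by
    simp only [pf, Category.assoc]
    rw [← S.adj.counit_naturality (S.Fl.map (S.Gr'.map u)), S.hTmap (S.Gr'.map u)]
    simp [eqToHom_map]
  rw [← Category.assoc, e2, ← Category.assoc, e1, Category.assoc, Category.assoc, S.Mq_w]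

noncomputable def Mmap {a b : Ac'} (u : a ⟶ b) : S.Mz a ⟶ S.Mz b :=
  (S.Mq_desc a (S.Fl.map (S.Gr'.map u) ≫ S.Mq b) (S.sq u)).choose

theorem Mmap_fac {a b : Ac'} (u : a ⟶ b) :
    S.Mq a ≫ S.Mmap u = S.Fl.map (S.Gr'.map u) ≫ S.Mq b :=
  (S.Mq_desc a (S.Fl.map (S.Gr'.map u) ≫ S.Mq b) (S.sq u)).choose_spec.1

/-- The comparison surfunctor. -/
noncomputable def M : Ac' ⥤ Ac where
  obj := S.Mz
  map := S.Mmap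
  map_id a := S.Mq_epi a (by
    show S.Mq a ≫ S.Mmap (𝟙 a) = S.Mq a ≫ 𝟙 (S.Mz a)
    rw [S.Mmap_fac]; simp)
  map_comp u v := S.Mq_epi _ (by
    show S.Mq _ ≫ S.Mmap (u ≫ v) = S.Mq _ ≫ S.Mmap u ≫ S.Mmap v
    rw [S.Mmap_fac, ← Category.assoc, S.Mmap_fac, Category.assoc, S.Mmap_fac]
    simp)

theorem s_ee (a : Ac') {d : X} (w : S.Gr'.obj a ⟶ d) :
    S.adj.unit.app (S.Gr'.obj a) ≫ S.ee a ≫ w = w := by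
  rw [← Category.assoc, S.hEta]
  simp [ee]

theorem Gr_Mmap {a b : Ac'} (u : a ⟶ b) : S.Gr.map (S.Mmap u) =
    eqToHom (S.Mhz a) ≫ S.Gr'.map u ≫ eqToHom (S.Mhz b).symm := by
  have h : S.adj.unit.app (S.Gr'.obj a) ≫ S.Gr.map (S.Mq a) ≫ S.Gr.map (S.Mmap u)
      = S.adj.unit.app (S.Gr'.obj a) ≫ S.Gr.map (S.Fl.map (S.Gr'.map u)) ≫ S.Gr.map (S.Mq b) := by
    rw [← Functor.map_comp, S.Mmap_fac, Functor.map_comp]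
  rw [S.Mq_Gr, S.Mq_Gr, S.adj.unit_naturality_assoc (S.Gr'.map u)] at h
  simp only [Category.assoc, S.s_ee] at h
  rw [eqToHom_comp_iff] at h
  rw [h]

theorem A_Mz (a : Ac') : S.A.obj (S.Mz a) = S.A₂.obj a :=
  (S.Mq_arity_obj a).symm.trans ((S.oAFl _).trans (S.oA'Gr' a))

theorem A_Mmap {a b : Ac'} (u : a ⟶ b) : S.A.map (S.Mmap u) =
    eqToHom (S.A_Mz a) ≫ S.A₂.map u ≫ eqToHom (S.A_Mz b).symm := by
  have h : S.A.map (S.Mq a) ≫ S.A.map (S.Mmap u)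
      = S.A.map (S.Fl.map (S.Gr'.map u)) ≫ S.A.map (S.Mq b) := by
    rw [← Functor.map_comp, S.Mmap_fac, Functor.map_comp]
  rw [S.Mq_arity, S.Mq_arity, S.mAFl, S.mA'Gr'] at h
  simp only [Category.assoc, eqToHom_trans, eqToHom_trans_assoc] at h
  rw [eqToHom_comp_iff] at h
  rw [h]
  simp

/-- The canonical candidate over a free object. -/
def qF (x : X) : S.Fl.obj (S.Gr'.obj (S.Fl'.obj x)) ⟶ S.Fl.obj x :=
  S.Fl.map (eqToHom (S.hT x).symm) ≫ S.adj.counit.app (S.Fl.obj x)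

theorem qF_Gr (x : X) : S.Gr.map (S.qF x) = S.ee (S.Fl'.obj x) ≫ eqToHom (S.hT x).symm := by
  simp [qF, ee, S.hMu, eqToHom_map]

theorem MzF (x : X) : S.Mz (S.Fl'.obj x) = S.Fl.obj x :=
  (S.Muniq (S.Fl'.obj x) (S.Fl.obj x) (S.qF x) (S.hT x) (S.qF_Gr x)).choose

theorem MqF (x : X) : S.qF x = S.Mq (S.Fl'.obj x) ≫ eqToHom (S.MzF x) :=
  (S.Muniq (S.Fl'.obj x) (S.Fl.obj x) (S.qF x) (S.hT x) (S.qF_Gr x)).choose_spec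

theorem Mmap_Fl' {x y : X} (v : x ⟶ y) : S.Mmap (S.Fl'.map v) =
    eqToHom (S.MzF x) ≫ S.Fl.map v ≫ eqToHom (S.MzF y).symm := by
  apply S.Mq_epi
  rw [S.Mmap_fac]
  have hq : S.Mq (S.Fl'.obj y) = S.qF y ≫ eqToHom (S.MzF y).symm := by rw [S.MqF]; simp
  have hq' : S.Mq (S.Fl'.obj x) ≫ eqToHom (S.MzF x) = S.qF x := (S.MqF x).symm
  rw [hq]
  have key : S.Fl.map (S.Gr'.map (S.Fl'.map v)) ≫ S.qF y = S.qF x ≫ S.Fl.map v := by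
    simp only [qF, Category.assoc]
    rw [← S.adj.counit_naturality (S.Fl.map v), S.hTmap v]
    simp [eqToHom_map]
  simp only [← Category.assoc]
  rw [key, hq']

theorem MA : S.M ⋙ S.A = S.A₂ :=
  CategoryTheory.Functor.ext (fun a => S.A_Mz a) (fun a b u => S.A_Mmap u)

theorem FlM : S.Fl' ⋙ S.M = S.Fl :=
  CategoryTheory.Functor.ext (fun x => S.MzF x) (fun x y v => S.Mmap_Fl' v)

theorem MGr : S.M ⋙ S.Gr = S.Gr' :=
  CategoryTheory.Functor.ext (fun a => S.Mhz a) (fun a b u => S.Gr_Mmap u)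

theorem unique (N : Ac' ⥤ Ac) (hNF : S.Fl' ⋙ N = S.Fl) (hNG : N ⋙ S.Gr = S.Gr') :
    N = S.M := by
  have hGrN : ∀ {p q : Ac'} (w : p ⟶ q), S.Gr.map (N.map w) =
      eqToHom (Functor.congr_obj hNG p) ≫ S.Gr'.map w ≫ eqToHom (Functor.congr_obj hNG q).symm :=
    fun w => Functor.congr_hom hNG w
  have hNFl : ∀ {p q : X} (w : p ⟶ q), N.map (S.Fl'.map w) =
      eqToHom (Functor.congr_obj hNF p) ≫ S.Fl.map w ≫ eqToHom (Functor.congr_obj hNF q).symm :=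
    fun w => Functor.congr_hom hNF w
  have hq : ∀ a : Ac',
      S.Gr.map (eqToHom (Functor.congr_obj hNF (S.Gr'.obj a)).symm ≫ N.map (S.adj'.counit.app a))
      = S.ee a ≫ eqToHom (Functor.congr_obj hNG a).symm := by
    intro a
    rw [Functor.map_comp, eqToHom_map, hGrN]
    simp [ee]
  have key := fun a : Ac' => S.Muniq a (N.obj a)
    (eqToHom (Functor.congr_obj hNF (S.Gr'.obj a)).symm ≫ N.map (S.adj'.counit.app a))
    (Functor.congr_obj hNG a) (hq a)
  refine CategoryTheory.Functor.ext (fun a => ((key a).choose).symm) (fun a b u => ?_)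
  have hmain : S.Mq a ≫ eqToHom (key a).choose ≫ N.map u
      = S.Mq a ≫ S.Mmap u ≫ eqToHom (key b).choose := by
    have ha : S.Mq a ≫ eqToHom (key a).choose
        = eqToHom (Functor.congr_obj hNF (S.Gr'.obj a)).symm ≫ N.map (S.adj'.counit.app a) :=
      (key a).choose_spec.symm
    have hb : S.Mq b ≫ eqToHom (key b).choose
        = eqToHom (Functor.congr_obj hNF (S.Gr'.obj b)).symm ≫ N.map (S.adj'.counit.app b) :=
      (key b).choose_spec.symm
    rw [← Category.assoc, ha, Category.assoc, ← Functor.map_comp,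
      ← S.adj'.counit_naturality u, Functor.map_comp, hNFl]
    simp only [Category.assoc, eqToHom_trans_assoc, eqToHom_refl, Category.id_comp]
    have hb' : S.Fl.map (S.Gr'.map u) ≫ eqToHom (Functor.congr_obj hNF (S.Gr'.obj b)).symm ≫
          N.map (S.adj'.counit.app b)
        = S.Fl.map (S.Gr'.map u) ≫ S.Mq b ≫ eqToHom (key b).choose :=
      congrArg (fun w => S.Fl.map (S.Gr'.map u) ≫ w) hb.symm
    refine hb'.trans ?_
    simp only [← Category.assoc]
    rw [S.Mmap_fac]
  have h2 := S.Mq_epi a hmain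
  rw [eqToHom_comp_iff] at h2
  show N.map u = eqToHom ((key a).choose).symm ≫ S.Mmap u ≫ eqToHom (((key b).choose).symm).symm
  rw [h2]

theorem final : ∃! M' : Ac' ⥤ Ac, M' ⋙ S.A = S.A₂ ∧ S.Fl' ⋙ M' = S.Fl ∧ M' ⋙ S.Gr = S.Gr' :=
  ⟨S.M, ⟨S.MA, S.FlM, S.MGr⟩, fun N hN => S.unique N hN.2.1 hN.2.2⟩

end Setup

end Lemma2

/-- Two suradjunctions with the same surmonad induce a unique comparison surfunctor (Lemma 2). -/
theorem unique_surfunctor_of_same_surmonad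
    {G : Type u} [Category.{v} G]
    {X : Type u₁} [Category.{v₁} X] {Ac : Type u₂} [Category.{v₂} Ac]
    {Ac' : Type u₃} [Category.{v₃} Ac']
    (A' : X ⥤ G) (A : Ac ⥤ G) (A₂ : Ac' ⥤ G)
    (Fl : X ⥤ Ac) (Gr : Ac ⥤ X) (adj : Fl ⊣ Gr) (h1 : IsSuradjunction A' A Fl Gr adj)
    (Fl' : X ⥤ Ac') (Gr' : Ac' ⥤ X) (adj' : Fl' ⊣ Gr') (h2 : IsSuradjunction A' A₂ Fl' Gr' adj')
    (hsame : adj.toMonad = adj'.toMonad)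
    (hcreate : ∀ ⦃a b : Ac⦄ (f g : a ⟶ b),
      (∃ (c : X) (h : Gr.obj b ⟶ c), IsSplitSurfork A' (Gr.map f) (Gr.map g) h) →
      CreatesSurcoequalizersOf A A' Gr f g) :
    ∃! M : Ac' ⥤ Ac, M ⋙ A = A₂ ∧ Fl' ⋙ M = Fl ∧ M ⋙ Gr = Gr' :=
  Setup.final ⟨A', A, A₂, Fl, Gr, adj, h1, Fl', Gr', adj', h2, hsame, hcreate⟩

end Sur
end

section
/- A surcategory (𝓔, A) over 𝔾 is surcomplete if and only if it has surequalizers (𝕁-surlimits for 𝕁 the parallel-pair category) and all small surproducts (𝕁-surlimits for 𝕁 a small discrete category, including the empty one). -/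
open CategoryTheory CategoryTheory.Limits CategoryTheory.MonoidalCategory

universe w w' v u v₁ u₁ v₂ u₂ v₃ u₃ v₄ u₄

namespace Sur

variable {G : Type u} [Category.{v} G]

universe s

/-! Surlimits are built from surproducts and surequalizers just as limits are built from
products and equalizers: the surlimit of `D` is the surequalizer of the two morphisms
`∏ⱼ D j ⟶ ∏_{φ : j ⟶ j'} D j'` given by `pr j'` and `pr j ≫ D.map φ`. Everything stays in the
fiber over `B` because all the structure maps lie over identities, while the arity of an
arbitrary surcone is carried along by the universal property of the first surproduct.
Conversely, surequalizers and surproducts are surlimits of shape `WalkingParallelPair` (made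
small) and `Discrete I`. -/

universe w''

theorem eq_eqToHom_of_comp_eqToHom {C : Type*} [Category C] {X Y Z : C} {f : X ⟶ Y}
    {p : Y = Z} {q : X = Z} (h : f ≫ eqToHom p = eqToHom q) : f = eqToHom (q.trans p.symm) := by
  rw [← eqToHom_trans q p.symm, ← comp_eqToHom_iff p, h]

section Surproducts

variable {E : Type u₁} [Category.{v₁} E]

def IsSurproduct (A : E ⥤ G) {I : Type w} (obj : I → E) {B : G}
    (h : ∀ i, A.obj (obj i) = B) {p : E} (pr : ∀ i, p ⟶ obj i) (hp : A.obj p = B) : Prop :=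
  (∀ i, A.map (pr i) ≫ eqToHom (h i) = eqToHom hp) ∧
    ∀ (y : E) (k : ∀ i, y ⟶ obj i) (β : A.obj y ⟶ B),
      (∀ i, A.map (k i) ≫ eqToHom (h i) = β) →
      ∃! fm : y ⟶ p, (∀ i, fm ≫ pr i = k i) ∧ A.map fm ≫ eqToHom hp = β

def HasSurproductsOfShape (A : E ⥤ G) (I : Type w) : Prop :=
  ∀ (obj : I → E) (B : G) (h : ∀ i, A.obj (obj i) = B),
    ∃ (p : E) (pr : ∀ i, p ⟶ obj i) (hp : A.obj p = B), IsSurproduct A obj h pr hp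

namespace IsSurproduct

variable {A : E ⥤ G} {I : Type w} {obj : I → E} {B : G} {h : ∀ i, A.obj (obj i) = B}
  {p : E} {pr : ∀ i, p ⟶ obj i} {hp : A.obj p = B}

theorem map_proj (hP : IsSurproduct A obj h pr hp) (i : I) :
    A.map (pr i) = eqToHom (hp.trans (h i).symm) :=
  eq_eqToHom_of_comp_eqToHom (hP.1 i)

theorem hom_ext (hP : IsSurproduct A obj h pr hp) {y : E} {f f' : y ⟶ p}
    (hpr : ∀ i, f ≫ pr i = f' ≫ pr i) (hA : A.map f = A.map f') : f = f' :=
  (hP.2 y (fun i => f' ≫ pr i) (A.map f' ≫ eqToHom hp)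
    (fun i => by simp [hP.map_proj])).unique ⟨hpr, by rw [hA]⟩ ⟨fun _ => rfl, rfl⟩

end IsSurproduct

end Surproducts

section Surlimits

variable {E : Type u₁} [Category.{v₁} E] {A : E ⥤ G} {J : Type w} [Category.{w'} J]

def Surcone.ofCone {F : J ⥤ E} {B : G} {h : ∀ j, A.obj (F.obj j) = B} (c : Cone F)
    (arity : A.obj c.pt ⟶ B) (fac : ∀ j, A.map (c.π.app j) ≫ eqToHom (h j) = arity) :
    Surcone A F B h where
  pt := c.pt
  leg := c.π.app
  w := c.w
  arity := arity
  fac := fac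

def Surcone.whisker {K : Type*} [Category K] (Φ : K ⥤ J) {F : J ⥤ E} {B : G}
    {h : ∀ j, A.obj (F.obj j) = B} (c : Surcone A F B h) :
    Surcone A (Φ ⋙ F) B (fun k => h (Φ.obj k)) where
  pt := c.pt
  leg k := c.leg (Φ.obj k)
  w f := c.w (Φ.map f)
  arity := c.arity
  fac k := c.fac (Φ.obj k)

theorem IsSurlimit.map_leg {F : J ⥤ E} {B : G} {h : ∀ j, A.obj (F.obj j) = B}
    {c : Surcone A F B h} (hc : IsSurlimit A c) (j : J) :
    A.map (c.leg j) ≫ eqToHom (h j) = eqToHom hc.pt_eq :=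
  (c.fac j).trans hc.arity_eq

theorem ArityConst.whiskerLeft {K : Type*} [Category K] {F : J ⥤ E} {B : G}
    (hF : ArityConst A F B) (Φ : K ⥤ J) : ArityConst A (Φ ⋙ F) B where
  obj_eq k := hF.obj_eq (Φ.obj k)
  map_eq f := hF.map_eq (Φ.map f)

theorem hasSurlimitsOfShape_of_asSmall (hlim : HasSurlimitsOfShape A (AsSmall.{w''} J)) :
    HasSurlimitsOfShape A J := by
  intro F B hF
  obtain ⟨c, hc⟩ := hlim _ B (hF.whiskerLeft AsSmall.down)
  refine ⟨⟨c.pt, fun j => c.leg ⟨j⟩, fun f => c.w ⟨f⟩, c.arity, fun j => c.fac ⟨j⟩⟩,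
    hc.pt_eq, hc.arity_eq, fun d => ?_⟩
  obtain ⟨f, ⟨hleg, harity⟩, huniq⟩ := hc.lift (d.whisker AsSmall.down)
  exact ⟨f, ⟨fun j => hleg ⟨j⟩, harity⟩,
    fun f' hf' => huniq f' ⟨fun j => hf'.1 (AsSmall.down.obj j), hf'.2⟩⟩

theorem arityConst_discreteFunctor {I : Type w} {obj : I → E} {B : G}
    (h : ∀ i, A.obj (obj i) = B) : ArityConst A (Discrete.functor obj) B where
  obj_eq j := h j.as
  map_eq := by
    rintro ⟨i⟩ ⟨i'⟩ φ
    obtain rfl : i = i' := Discrete.eq_of_hom φ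
    simp

theorem arityConst_parallelPair {a b : E} {f g : a ⟶ b} (hab : A.obj a = A.obj b)
    (hf : A.map f = eqToHom hab) (hg : A.map g = eqToHom hab) :
    ArityConst A (parallelPair f g) (A.obj a) where
  obj_eq := by
    rintro (_ | _)
    exacts [rfl, hab.symm]
  map_eq := by
    rintro _ _ (_ | _ | _) <;> simp [hf, hg]

theorem hasSurproductsOfShape_of_hasSurlimitsOfShape {I : Type w}
    (hlim : HasSurlimitsOfShape A (Discrete I)) : HasSurproductsOfShape A I := by
  intro obj B h
  obtain ⟨c, hc⟩ := hlim (Discrete.functor obj) B (arityConst_discreteFunctor h)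
  refine ⟨c.pt, fun i => c.leg ⟨i⟩, hc.pt_eq, fun i => hc.map_leg ⟨i⟩, fun y k β hk => ?_⟩
  obtain ⟨fm, ⟨hleg, harity⟩, huniq⟩ := hc.lift (Surcone.ofCone (Fan.mk y k) β fun j => hk j.as)
  exact ⟨fm, ⟨fun i => hleg ⟨i⟩, harity⟩, fun f' hf' => huniq f' ⟨fun j => hf'.1 j.as, hf'.2⟩⟩

theorem hasSurequalizers_of_hasSurlimitsOfShape
    (hlim : HasSurlimitsOfShape A WalkingParallelPair) : HasSurequalizers A := by
  intro a b f g hab hf hg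
  obtain ⟨c, hc⟩ := hlim _ _ (arityConst_parallelPair hab hf hg)
  have he : A.map (c.leg .zero) = eqToHom hc.pt_eq := eq_eqToHom_of_comp_eqToHom (hc.map_leg _)
  refine ⟨c.pt, c.leg .zero, hc.pt_eq, he, (c.w .left).trans (c.w .right).symm,
    fun d k hk => ?_⟩
  obtain ⟨l, ⟨hl, -⟩, huniq⟩ := hc.lift (Surcone.ofCone (Fork.ofι k hk) (A.map k) (by
    rintro (_ | _) <;> simp [hf]))
  refine ⟨l, hl .zero, fun l' hl' => huniq l' ⟨?_, ?_⟩⟩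
  · rintro (_ | _)
    · exact hl'
    · change l' ≫ c.leg .one = k ≫ f
      rw [← c.w .left, ← hl', Category.assoc]
      rfl
  · change A.map l' ≫ eqToHom hc.pt_eq = A.map k
    rw [← he, ← A.map_comp, hl']

end Surlimits

section Construction

variable {E : Type u₁} [Category.{v₁} E] {A : E ⥤ G} {J : Type w} [Category.{w'} J]
  {D : J ⥤ E} {B : G} {h : ∀ j, A.obj (D.obj j) = B}

/-- For the usual pair `s, t : ∏ D j ⟶ ∏_{φ : j ⟶ j'} D j'` with components `pr j'` and
`pr j ≫ D.map φ`, a morphism equalizes `s` and `t` exactly when its components form a cone. -/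
theorem IsSurproduct.comp_eq_comp_iff_isCone {q : E}
    {qr : ∀ φ : (j : J) × (j' : J) × (j ⟶ j'), q ⟶ D.obj φ.2.1} {hq : A.obj q = B}
    (hQ : IsSurproduct A (fun φ : (j : J) × (j' : J) × (j ⟶ j') => D.obj φ.2.1)
      (fun φ => h φ.2.1) qr hq)
    {p : E} {pr : ∀ j, p ⟶ D.obj j} {s t : p ⟶ q} (hs : ∀ φ, s ≫ qr φ = pr φ.2.1)
    (ht : ∀ φ, t ≫ qr φ = pr φ.1 ≫ D.map φ.2.2) (hst : A.map s = A.map t) {y : E}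
    (m : y ⟶ p) :
    m ≫ s = m ≫ t ↔ ∀ {j j'} (φ : j ⟶ j'), (m ≫ pr j) ≫ D.map φ = m ≫ pr j' := by
  constructor
  · intro hm j j' φ
    simpa [hs, ht] using (congrArg (· ≫ qr ⟨j, j', φ⟩) hm).symm
  · intro hm
    refine hQ.hom_ext (fun φ => ?_) (by rw [A.map_comp, A.map_comp, hst])
    rw [Category.assoc, Category.assoc, hs, ht, ← Category.assoc, hm]

theorem IsSurproduct.exists_isSurlimit {p : E} {pr : ∀ j, p ⟶ D.obj j} {hp : A.obj p = B}
    (hP : IsSurproduct A D.obj h pr hp) {c : E} (e : c ⟶ p) (hc : A.obj c = A.obj p)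
    (he : A.map e = eqToHom hc)
    (hcone : ∀ {j j'} (φ : j ⟶ j'), (e ≫ pr j) ≫ D.map φ = e ≫ pr j')
    (hlift : ∀ {y : E} (m : y ⟶ p), (∀ {j j'} (φ : j ⟶ j'), (m ≫ pr j) ≫ D.map φ = m ≫ pr j') →
      ∃! l : y ⟶ c, l ≫ e = m) :
    ∃ c : Surcone A D B h, IsSurlimit A c := by
  refine ⟨⟨c, fun j => e ≫ pr j, hcone, eqToHom (hc.trans hp), fun j => ?_⟩,
    hc.trans hp, rfl, fun d => ?_⟩
  · simp [he, hP.map_proj]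
  obtain ⟨m, ⟨hm, hmA⟩, hmu⟩ := hP.2 d.pt d.leg d.arity d.fac
  obtain ⟨l, hl, hlu⟩ := hlift m fun φ => by rw [hm, hm, d.w]
  refine ⟨l, ⟨fun j => by rw [← Category.assoc, hl, hm], ?_⟩, fun l' ⟨hl'pr, hl'A⟩ => hlu l' ?_⟩
  · simpa [← hl, he] using hmA
  · refine hmu _ ⟨fun j => by simpa using hl'pr j, ?_⟩
    simpa [he] using hl'A

theorem hasSurlimitsOfShape_of_hasSurequalizers_and_surproducts (hE : HasSurequalizers A)
    (hobj : HasSurproductsOfShape A J)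
    (harr : HasSurproductsOfShape A ((j : J) × (j' : J) × (j ⟶ j'))) :
    HasSurlimitsOfShape A J := by
  intro D B hD
  obtain ⟨p, pr, hp, hP⟩ := hobj D.obj B hD.obj_eq
  obtain ⟨q, qr, hq, hQ⟩ := harr (fun φ => D.obj φ.2.1) B (fun φ => hD.obj_eq φ.2.1)
  obtain ⟨s, ⟨hs, hsA⟩, -⟩ := hQ.2 p (fun φ => pr φ.2.1) (eqToHom hp) (fun φ => hP.1 φ.2.1)
  obtain ⟨t, ⟨ht, htA⟩, -⟩ := hQ.2 p (fun φ => pr φ.1 ≫ D.map φ.2.2) (eqToHom hp)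
    (fun φ => by simp [hD.map_eq, hP.map_proj])
  replace hsA := eq_eqToHom_of_comp_eqToHom hsA
  replace htA := eq_eqToHom_of_comp_eqToHom htA
  have iff_isCone := fun {y : E} (m : y ⟶ p) =>
    hQ.comp_eq_comp_iff_isCone hs ht (hsA.trans htA.symm) m
  obtain ⟨c, e, hc, he, hes, hlift⟩ := hE s t _ hsA htA
  exact hP.exists_isSurlimit e hc he ((iff_isCone e).1 hes)
    fun m hm => hlift m ((iff_isCone m).2 hm)

end Construction

/-- A surcategory is surcomplete iff it has surequalizers and all small surproducts. -/
theorem surcomplete_iff_surequalizers_and_surproducts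
    {G : Type u} [Category.{v} G] {E : Type u₁} [Category.{v₁} E] (A : E ⥤ G) :
    (∀ (J : Type s) [SmallCategory J], HasSurlimitsOfShape A J) ↔
      (HasSurequalizers A ∧
       ∀ (I : Type s) (obj : I → E) (B : G) (h : ∀ i, A.obj (obj i) = B),
         ∃ (p : E) (pr : ∀ i, p ⟶ obj i) (hp : A.obj p = B),
           (∀ i, A.map (pr i) ≫ eqToHom (h i) = eqToHom hp) ∧
           ∀ (y : E) (k : ∀ i, y ⟶ obj i) (β : A.obj y ⟶ B),
             (∀ i, A.map (k i) ≫ eqToHom (h i) = β) →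
             ∃! fm : y ⟶ p, (∀ i, fm ≫ pr i = k i) ∧ A.map fm ≫ eqToHom hp = β) := by
  change _ ↔ HasSurequalizers A ∧ ∀ I : Type s, HasSurproductsOfShape A I
  refine ⟨fun hlim => ⟨?_, fun I => ?_⟩, fun ⟨hE, hprod⟩ J _ => ?_⟩
  · exact hasSurequalizers_of_hasSurlimitsOfShape (hasSurlimitsOfShape_of_asSmall (hlim _))
  · exact hasSurproductsOfShape_of_hasSurlimitsOfShape (hlim _)
  · exact hasSurlimitsOfShape_of_hasSurequalizers_and_surproducts hE (hprod J) (hprod _)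

end Sur
end

section
/- Let T be a surmonad on a surcategory (𝓔, A) over 𝔾. If (𝓔, A) is surcomplete, then the surcategory (𝓔^T, A) of suralgebras is surcomplete. -/
open CategoryTheory CategoryTheory.Limits CategoryTheory.MonoidalCategory

universe w w' v u v₁ u₁ v₂ u₂ v₃ u₃ v₄ u₄

namespace Sur

variable {G : Type u} [Category.{v} G]

universe s

/-! Let `L` be a surlimit in `E` of the carriers of a diagram `F` of algebras. Since `T` lies over
identities, `T L ⟶ T (F j) ⟶ F j` is again a surcone, and the map `T L ⟶ L` it induces is the
structure map. The algebra laws, and the fact that every induced map is an algebra morphism,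
follow from uniqueness of factorisations through `L`, tested on legs and on arities, as for the
creation of limits by the Eilenberg–Moore forgetful functor. -/

section

variable {E : Type u₁} [Category.{v₁} E] {A : E ⥤ G} {J : Type w} [Category.{w'} J]

def Surcone.extend {F : J ⥤ E} {B : G} {h : ∀ j, A.obj (F.obj j) = B} (c : Surcone A F B h)
    {X : E} (f : X ⟶ c.pt) : Surcone A F B h where
  pt := X
  leg j := f ≫ c.leg j
  w k := by rw [Category.assoc, c.w]
  arity := A.map f ≫ c.arity
  fac j := by rw [A.map_comp, Category.assoc, c.fac]

namespace IsSurlimit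

variable {F : J ⥤ E} {B : G} {h : ∀ j, A.obj (F.obj j) = B} {c : Surcone A F B h}

noncomputable def liftHom (hc : IsSurlimit A c) (c' : Surcone A F B h) : c'.pt ⟶ c.pt :=
  (hc.lift c').exists.choose

theorem liftHom_leg (hc : IsSurlimit A c) (c' : Surcone A F B h) (j : J) :
    hc.liftHom c' ≫ c.leg j = c'.leg j :=
  (hc.lift c').exists.choose_spec.1 j

theorem map_liftHom (hc : IsSurlimit A c) (c' : Surcone A F B h) :
    A.map (hc.liftHom c') ≫ eqToHom hc.pt_eq = c'.arity :=
  (hc.lift c').exists.choose_spec.2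

theorem uniq (hc : IsSurlimit A c) (c' : Surcone A F B h) (f : c'.pt ⟶ c.pt)
    (hleg : ∀ j, f ≫ c.leg j = c'.leg j) (harity : A.map f ≫ eqToHom hc.pt_eq = c'.arity) :
    f = hc.liftHom c' :=
  (hc.lift c').unique ⟨hleg, harity⟩ ⟨hc.liftHom_leg c', hc.map_liftHom c'⟩

theorem hom_ext (hc : IsSurlimit A c) {X : E} {f g : X ⟶ c.pt}
    (hleg : ∀ j, f ≫ c.leg j = g ≫ c.leg j) (harity : A.map f = A.map g) : f = g := by
  have harity_f : A.map f ≫ eqToHom hc.pt_eq = (c.extend f).arity := by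
    change _ = A.map f ≫ c.arity
    rw [hc.arity_eq]
  rw [hc.uniq (c.extend f) f (fun _ => rfl) harity_f,
    hc.uniq (c.extend f) g (fun j => (hleg j).symm) (harity ▸ harity_f)]

end IsSurlimit

namespace IsSurmonad

variable {T : Monad E}

theorem obj_eq (hT : IsSurmonad A T) (X : E) : A.obj (T.obj X) = A.obj X :=
  Functor.congr_obj hT.sur X

theorem map_map (hT : IsSurmonad A T) {X Y : E} (f : X ⟶ Y) :
    A.map (T.map f) = eqToHom (hT.obj_eq X) ≫ A.map f ≫ eqToHom (hT.obj_eq Y).symm :=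
  Functor.congr_hom hT.sur f

theorem map_algebra_a (hT : IsSurmonad A T) (X : T.Algebra) :
    A.map X.a = eqToHom (hT.obj_eq X.A) := by
  have hunit : A.map (T.η.app X.A ≫ X.a) = A.map (𝟙 X.A) := by rw [X.unit]
  rw [A.map_comp, A.map_id, hT.unit_arity, eqToHom_comp_iff] at hunit
  simpa using hunit

end IsSurmonad

variable {T : Monad E}

-- `F ⋙ T.forget`, but reducibly so: legs of its cones then compose with the `(F.obj j).a`
-- without `erw`. The hypotheses `h` and `h'` below are the same proposition in the two spellings.
abbrev carriers (F : J ⥤ T.Algebra) : J ⥤ E where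
  obj j := (F.obj j).A
  map k := (F.map k).f

variable {F : J ⥤ T.Algebra} {B : G} {h : ∀ j, A.obj ((carriers F).obj j) = B}
  {h' : ∀ j, (T.forget ⋙ A).obj (F.obj j) = B}

def Surcone.act (hT : IsSurmonad A T) (c : Surcone A (carriers F) B h) :
    Surcone A (carriers F) B h where
  pt := T.obj c.pt
  leg j := T.map (c.leg j) ≫ (F.obj j).a
  w k := by rw [Category.assoc, ← (F.map k).h, ← T.map_comp_assoc, c.w k]
  arity := eqToHom (hT.obj_eq c.pt) ≫ c.arity
  fac j := by
    rw [A.map_comp, hT.map_map, hT.map_algebra_a, ← c.fac j]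
    simp

abbrev Surcone.forget (c : Surcone (T.forget ⋙ A) F B h') : Surcone A (carriers F) B h where
  pt := c.pt.A
  leg j := (c.leg j).f
  w k := congrArg Monad.Algebra.Hom.f (c.w k)
  arity := c.arity
  fac := c.fac

namespace IsSurlimit

variable {c : Surcone A (carriers F) B h}

noncomputable def act (hT : IsSurmonad A T) (hc : IsSurlimit A c) : T.obj c.pt ⟶ c.pt :=
  hc.liftHom (c.act hT)

theorem act_leg (hT : IsSurmonad A T) (hc : IsSurlimit A c) (j : J) :
    hc.act hT ≫ c.leg j = T.map (c.leg j) ≫ (F.obj j).a :=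
  hc.liftHom_leg (c.act hT) j

theorem map_act (hT : IsSurmonad A T) (hc : IsSurlimit A c) :
    A.map (hc.act hT) = eqToHom (hT.obj_eq c.pt) := by
  have harity : A.map (hc.act hT) ≫ eqToHom hc.pt_eq = eqToHom (hT.obj_eq c.pt) ≫ c.arity :=
    hc.map_liftHom (c.act hT)
  rw [comp_eqToHom_iff, hc.arity_eq] at harity
  simpa using harity

noncomputable def algebra (hT : IsSurmonad A T) (hc : IsSurlimit A c) : T.Algebra where
  A := c.pt
  a := hc.act hT
  unit := hc.hom_ext
    (fun j => by
      rw [Category.assoc, act_leg, ← T.η.naturality_assoc, Functor.id_map, (F.obj j).unit]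
      simp)
    (by simp [hT.unit_arity, hc.map_act hT])
  assoc := hc.hom_ext
    (fun j => by
      rw [Category.assoc, Category.assoc, act_leg, ← T.μ.naturality_assoc, (F.obj j).assoc,
        ← T.map_comp_assoc, act_leg, T.map_comp_assoc, Functor.comp_map])
    (by rw [A.map_comp, A.map_comp, hT.mul_arity, hT.map_map, hc.map_act hT]; simp)

noncomputable def liftedCone (hT : IsSurmonad A T) (hc : IsSurlimit A c) :
    Surcone (T.forget ⋙ A) F B h' where
  pt := hc.algebra hT
  leg j := ⟨c.leg j, (hc.act_leg hT j).symm⟩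
  w k := Monad.Algebra.Hom.ext (c.w k)
  arity := c.arity
  fac := c.fac

theorem map_liftHom_forget_comp_act (hT : IsSurmonad A T) (hc : IsSurlimit A c)
    (c' : Surcone (T.forget ⋙ A) F B h') :
    T.map (hc.liftHom c'.forget) ≫ hc.act hT = c'.pt.a ≫ hc.liftHom c'.forget :=
  hc.hom_ext
    (fun j => by
      rw [Category.assoc, Category.assoc, act_leg, ← T.map_comp_assoc, liftHom_leg]
      exact (c'.leg j).h)
    (by simp [hT.map_map, hT.map_algebra_a, hc.map_act hT])

theorem isSurlimit_liftedCone (hT : IsSurmonad A T) (hc : IsSurlimit A c) :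
    IsSurlimit (T.forget ⋙ A) (hc.liftedCone hT (h' := h')) where
  pt_eq := hc.pt_eq
  arity_eq := hc.arity_eq
  lift c' :=
    ⟨Monad.Algebra.Hom.mk (hc.liftHom c'.forget) (hc.map_liftHom_forget_comp_act hT c'),
      ⟨fun j => Monad.Algebra.Hom.ext (hc.liftHom_leg c'.forget j), hc.map_liftHom c'.forget⟩,
      fun g hg => Monad.Algebra.Hom.ext
        (hc.uniq c'.forget g.f (fun j => congrArg Monad.Algebra.Hom.f (hg.1 j)) hg.2)⟩

end IsSurlimit

end

/-- If the base surcategory of a surmonad is surcomplete then so is its surcategory of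
suralgebras. -/
theorem suralgebras_surcomplete
    {G : Type u} [Category.{v} G] {E : Type u₁} [Category.{v₁} E]
    (A : E ⥤ G) (T : Monad E) (hT : IsSurmonad A T)
    (hc : ∀ (J : Type s) [SmallCategory J], HasSurlimitsOfShape A J) :
    ∀ (J : Type s) [SmallCategory J], HasSurlimitsOfShape (T.forget ⋙ A) J := by
  intro J _ F B hF
  obtain ⟨c, hc⟩ := hc J (carriers F) B ⟨hF.obj_eq, hF.map_eq⟩
  exact ⟨hc.liftedCone hT, hc.isSurlimit_liftedCone hT⟩

end Sur
end

section
/- Let T be a surmonad on a surcategory (𝓔, A) over 𝔾. If (𝓔, A) has K-equalizers, then the surcategory (𝓔^T, A) of suralgebras has K-equalizers. -/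
open CategoryTheory CategoryTheory.Limits CategoryTheory.MonoidalCategory

universe w w' v u v₁ u₁ v₂ u₂ v₃ u₃ v₄ u₄

namespace Sur

variable {G : Type u} [Category.{v} G]

/-- If the base surcategory of a surmonad has K-equalizers then so does its surcategory of
suralgebras. -/
theorem suralgebras_hasKEqualizers
    {G : Type u} [Category.{v} G] {E : Type u₁} [Category.{v₁} E]
    (A : E ⥤ G) (T : Monad E) (hT : IsSurmonad A T)
    (hK : HasKEqualizers A) :
    HasKEqualizers (T.forget ⋙ A) := by
  intro a b f g hfg
  obtain ⟨c, e, hc, he, hef, huniv⟩ := hK f.f g.f hfg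
  -- `e` is a monomorphism
  have emono : ∀ {d : E} (u v : d ⟶ c), u ≫ e = v ≫ e → u = v := by
    intro d u v huv
    have h1 : (u ≫ e) ≫ f.f = (u ≫ e) ≫ g.f := by
      rw [Category.assoc, Category.assoc, hef]
    obtain ⟨l, -, hl⟩ := huniv (u ≫ e) h1
    exact (hl u rfl).trans (hl v huv.symm).symm
  -- the structure map on `c`
  have hσw : (T.map e ≫ a.a) ≫ f.f = (T.map e ≫ a.a) ≫ g.f := by
    rw [Category.assoc, ← f.h, Category.assoc, ← g.h, ← Category.assoc,
      ← Category.assoc, ← T.map_comp, ← T.map_comp, hef]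
  obtain ⟨σ, hσe, -⟩ := huniv (T.map e ≫ a.a) hσw
  have hnatη : T.η.app c ≫ T.map e = e ≫ T.η.app a.A := (T.η.naturality e).symm
  have hnatμ : T.μ.app c ≫ T.map e = T.map (T.map e) ≫ T.μ.app a.A :=
    (T.μ.naturality e).symm
  let calg : T.Algebra :=
    { A := c
      a := σ
      unit := by
        apply emono
        rw [Category.assoc, hσe, ← Category.assoc, hnatη, Category.assoc,
          a.unit, Category.comp_id]
        exact (Category.id_comp e).symm
      assoc := by
        apply emono
        have h1 : T.μ.app c ≫ σ ≫ e = T.map (T.map e) ≫ T.map a.a ≫ a.a := by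
          rw [hσe, ← Category.assoc, hnatμ, Category.assoc, a.assoc]
        have h2 : T.map σ ≫ σ ≫ e = T.map (T.map e) ≫ T.map a.a ≫ a.a := by
          rw [hσe, ← Category.assoc, ← T.map_comp, hσe, T.map_comp, Category.assoc]
        rw [Category.assoc, Category.assoc, h1, h2] }
  let ehom : calg ⟶ a := ⟨e, hσe.symm⟩
  refine ⟨calg, ehom, hc, he, ?_, ?_⟩
  · apply Monad.Algebra.Hom.ext
    show (ehom.f ≫ f.f) = (ehom.f ≫ g.f)
    exact hef
  · intro d k hk
    have hkf : k.f ≫ f.f = k.f ≫ g.f := congrArg Monad.Algebra.Hom.f hk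
    obtain ⟨l, hl, hluniq⟩ := huniv k.f hkf
    have hlhom : T.map l ≫ σ = d.a ≫ l := by
      apply emono
      rw [Category.assoc, hσe, ← Category.assoc, ← T.map_comp, hl,
        Category.assoc, hl, k.h]
    refine ⟨⟨l, hlhom⟩, ?_, ?_⟩
    · apply Monad.Algebra.Hom.ext
      exact hl
    · intro y hy
      apply Monad.Algebra.Hom.ext
      exact hluniq y.f (congrArg Monad.Algebra.Hom.f hy)

end Sur
end
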